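/- Exact identity underlying the Main Lemma: Let α ∈ (0, 1], γ > 0 and t > 0. Then (γ / Γ(α)) · ∫_0^t (t-s)^{α-1} · E_α(γ s^α) ds = E_α(γ t^α) - 1. -/

import Mathlib

/-!
Expand `E_α(γ s^α) = ∑ γⁿ s^{nα} / Γ(nα + 1)`. By the Beta integral,
`γ / Γ(α) · ∫_0^t (t-s)^{α-1} γⁿ s^{nα} / Γ(nα+1) ds = (γ t^α)^{n+1} / Γ((n+1)α + 1)`,
so the fractional integral shifts the `n`-th term of the series to the `(n+1)`-st. All terms are
nonnegative, so integral and sum commute, and the result is `E_α(γ t^α)` without its constant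
term `1`. The series converges by the ratio test, since log-convexity of `Γ` gives
`Γ((n+1)α + 1) ≥ ((n+1)α)^α Γ(nα + 1)` for `α ≤ 1`.
-/

open MeasureTheory

noncomputable def mittagLeffler (α x : ℝ) : ℝ :=
  ∑' n : ℕ, x ^ n / Real.Gamma ((n : ℝ) * α + 1)

open Real Filter Set

/-- Log-convexity of `Γ` at `u + 1 - α = α u + (1 - α)(u + 1)`, combined with `Γ(u+1) = u Γ(u)`. -/
theorem rpow_mul_Gamma_add_one_sub_le {u α : ℝ} (hu : 0 < u) (hα0 : 0 ≤ α) (hα1 : α ≤ 1) :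
    u ^ α * Gamma (u + 1 - α) ≤ Gamma (u + 1) := by
  have hΓu := Gamma_pos_of_pos hu
  have hconv := convexOn_log_Gamma.2 (mem_Ioi.2 hu) (mem_Ioi.2 (by linarith : 0 < u + 1))
    hα0 (by linarith : 0 ≤ 1 - α) (by ring)
  simp only [Function.comp_apply, smul_eq_mul] at hconv
  rw [show α * u + (1 - α) * (u + 1) = u + 1 - α by ring, Gamma_add_one hu.ne',
    log_mul hu.ne' hΓu.ne'] at hconv
  rw [← log_le_log_iff (by have := Gamma_pos_of_pos (by linarith : 0 < u + 1 - α); positivity)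
    (Gamma_pos_of_pos (by linarith)), log_mul (by positivity) (Gamma_pos_of_pos (by linarith)).ne',
    log_rpow hu, Gamma_add_one hu.ne', log_mul hu.ne' hΓu.ne']
  linarith

theorem integral_rpow_mul_sub_rpow {a b t : ℝ} (ha : 0 < a) (hb : 0 < b) (ht : 0 < t) :
    ∫ s in (0 : ℝ)..t, s ^ (a - 1) * (t - s) ^ (b - 1)
      = Gamma a * Gamma b / Gamma (a + b) * t ^ (a + b - 1) := by
  have h := Complex.betaIntegral_scaled a b ht
  rw [Complex.betaIntegral_eq_Gamma_mul_div _ _ (by simpa) (by simpa)] at h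
  have hreal : ∫ s in (0 : ℝ)..t, (s : ℂ) ^ ((a : ℂ) - 1) * ((t : ℂ) - s) ^ ((b : ℂ) - 1)
      = ↑(∫ s in (0 : ℝ)..t, s ^ (a - 1) * (t - s) ^ (b - 1)) := by
    rw [← intervalIntegral.integral_ofReal]
    refine intervalIntegral.integral_congr fun s hs => ?_
    rw [uIcc_of_le ht.le] at hs
    push_cast
    rw [Complex.ofReal_cpow hs.1, Complex.ofReal_cpow (sub_nonneg.2 hs.2)]
    push_cast
    ring_nf
  rw [hreal, ← Complex.ofReal_add, Complex.Gamma_ofReal, Complex.Gamma_ofReal,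
    Complex.Gamma_ofReal, ← Complex.ofReal_one, ← Complex.ofReal_sub,
    ← Complex.ofReal_cpow ht.le, mul_comm] at h
  exact_mod_cast h

theorem intervalIntegral_tsum_of_nonneg {μ : Measure ℝ} {F : ℕ → ℝ → ℝ} {a b : ℝ} (hab : a ≤ b)
    (hF_int : ∀ n, IntervalIntegrable (F n) μ a b) (hF_nonneg : ∀ n, ∀ s ∈ Ioc a b, 0 ≤ F n s)
    (hF_sum : Summable fun n => ∫ s in a..b, F n s ∂μ) :
    ∫ s in a..b, ∑' n, F n s ∂μ = ∑' n, ∫ s in a..b, F n s ∂μ := by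
  simp only [intervalIntegral.integral_of_le hab] at hF_sum ⊢
  refine (integral_tsum_of_summable_integral_norm (fun n => (hF_int n).1) ?_).symm
  exact hF_sum.congr fun n =>
    setIntegral_congr_fun measurableSet_Ioc fun s hs => (norm_of_nonneg (hF_nonneg n s hs)).symm

noncomputable def mittagLefflerTerm (α : ℝ) (n : ℕ) (x : ℝ) : ℝ :=
  x ^ n / Gamma (n * α + 1)

theorem mittagLeffler_eq_tsum (α x : ℝ) :
    mittagLeffler α x = ∑' n : ℕ, mittagLefflerTerm α n x :=
  rfl

theorem mittagLefflerTerm_nonneg {α x : ℝ} (hα : 0 ≤ α) (hx : 0 ≤ x) (n : ℕ) :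
    0 ≤ mittagLefflerTerm α n x :=
  div_nonneg (pow_nonneg hx n) (Gamma_pos_of_pos (by positivity)).le

theorem mittagLefflerTerm_pos {α x : ℝ} (hα : 0 ≤ α) (hx : 0 < x) (n : ℕ) :
    0 < mittagLefflerTerm α n x :=
  div_pos (pow_pos hx n) (Gamma_pos_of_pos (by positivity))

theorem summable_mittagLefflerTerm {α : ℝ} (hα0 : 0 < α) (hα1 : α ≤ 1) (x : ℝ) :
    Summable fun n : ℕ => mittagLefflerTerm α n x := by
  refine summable_of_ratio_norm_eventually_le (r := 1 / 2) (by norm_num) ?_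
  have hgrowth : Tendsto (fun n : ℕ => ((n + 1 : ℕ) * α) ^ α) atTop atTop :=
    (tendsto_rpow_atTop hα0).comp <| ((tendsto_natCast_atTop_atTop).comp
      (tendsto_add_atTop_nat 1)).atTop_mul_const hα0
  filter_upwards [hgrowth.eventually_ge_atTop (2 * |x|)] with n hn
  have hΓn : 0 < Gamma (n * α + 1) := Gamma_pos_of_pos (by positivity)
  have hΓ : ((n + 1 : ℕ) * α) ^ α * Gamma (n * α + 1) ≤ Gamma ((n + 1 : ℕ) * α + 1) := by
    have := rpow_mul_Gamma_add_one_sub_le (by positivity : 0 < ((n + 1 : ℕ) : ℝ) * α) hα0.le hα1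
    rwa [show ((n + 1 : ℕ) : ℝ) * α + 1 - α = n * α + 1 by push_cast; ring] at this
  have hu : 0 < (((n + 1 : ℕ) : ℝ) * α) ^ α := by positivity
  simp only [mittagLefflerTerm, norm_div, norm_pow, Real.norm_eq_abs, abs_of_pos hΓn,
    abs_of_pos (hΓ.trans_lt' (by positivity))]
  calc |x| ^ (n + 1) / Gamma ((n + 1 : ℕ) * α + 1)
      ≤ |x| * |x| ^ n / ((((n + 1 : ℕ) : ℝ) * α) ^ α * Gamma (n * α + 1)) := by
        rw [pow_succ']
        gcongr
    _ = |x| / (((n + 1 : ℕ) : ℝ) * α) ^ α * (|x| ^ n / Gamma (n * α + 1)) := by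
        rw [mul_div_mul_comm]
    _ ≤ 1 / 2 * (|x| ^ n / Gamma (n * α + 1)) := by
        refine mul_le_mul_of_nonneg_right ?_ (by positivity)
        rw [div_le_iff₀ hu]
        linarith

theorem mittagLeffler_eq_one_add_tsum {α : ℝ} (hα0 : 0 < α) (hα1 : α ≤ 1) (x : ℝ) :
    mittagLeffler α x = 1 + ∑' n : ℕ, mittagLefflerTerm α (n + 1) x := by
  rw [mittagLeffler_eq_tsum, (summable_mittagLefflerTerm hα0 hα1 x).tsum_eq_zero_add]
  simp [mittagLefflerTerm]

theorem mul_integral_sub_rpow_mul_mittagLefflerTerm {α t : ℝ} (hα : 0 < α) (ht : 0 < t)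
    (γ : ℝ) (n : ℕ) :
    γ * ∫ s in (0 : ℝ)..t, (t - s) ^ (α - 1) * mittagLefflerTerm α n (γ * s ^ α)
      = Gamma α * mittagLefflerTerm α (n + 1) (γ * t ^ α) := by
  have hΓn : Gamma (n * α + 1) ≠ 0 := (Gamma_pos_of_pos (by positivity)).ne'
  have hintegrand : EqOn (fun s => (t - s) ^ (α - 1) * mittagLefflerTerm α n (γ * s ^ α))
      (fun s => γ ^ n / Gamma (n * α + 1) * (s ^ (n * α + 1 - 1) * (t - s) ^ (α - 1)))
      (uIcc 0 t) := fun s hs => by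
    rw [uIcc_of_le ht.le] at hs
    simp only [mittagLefflerTerm, add_sub_cancel_right, mul_comm (n : ℝ) α,
      rpow_mul_natCast hs.1]
    ring
  rw [intervalIntegral.integral_congr hintegrand, intervalIntegral.integral_const_mul,
    integral_rpow_mul_sub_rpow (by positivity) hα ht, mittagLefflerTerm,
    show (n : ℝ) * α + 1 + α - 1 = α * (n + 1 : ℕ) by push_cast; ring,
    show (n : ℝ) * α + 1 + α = (n + 1 : ℕ) * α + 1 by push_cast; ring,
    rpow_mul_natCast ht.le, mul_pow]
  field_simp
  ring

/-- Exact identity underlying the Main Lemma: for `α ∈ (0,1]`, `γ > 0`, `t > 0`,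
`(γ / Γ(α)) ∫_0^t (t-s)^{α-1} E_α(γ s^α) ds = E_α(γ t^α) - 1`. -/
theorem main_lemma_exact_identity (α γ t : ℝ) (hα : α ∈ Set.Ioc (0 : ℝ) 1)
    (hγ : 0 < γ) (ht : 0 < t) :
    γ / Real.Gamma α *
        ∫ s in (0 : ℝ)..t, (t - s) ^ (α - 1) * mittagLeffler α (γ * s ^ α)
      = mittagLeffler α (γ * t ^ α) - 1 := by
  obtain ⟨hα0, hα1⟩ := hα
  have hΓα : 0 < Gamma α := Gamma_pos_of_pos hα0
  set F : ℕ → ℝ → ℝ := fun n s => (t - s) ^ (α - 1) * mittagLefflerTerm α n (γ * s ^ α)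
  have hF (n : ℕ) : ∫ s in (0 : ℝ)..t, F n s
      = Gamma α / γ * mittagLefflerTerm α (n + 1) (γ * t ^ α) := by
    rw [div_mul_eq_mul_div, eq_div_iff hγ.ne', mul_comm,
      mul_integral_sub_rpow_mul_mittagLefflerTerm hα0 ht]
  -- A non-integrable function would have integral `0`.
  have hF_int (n : ℕ) : IntervalIntegrable (F n) volume 0 t :=
    intervalIntegral.intervalIntegrable_of_integral_ne_zero <| by
      rw [hF n]
      exact (mul_pos (div_pos hΓα hγ) (mittagLefflerTerm_pos hα0.le (by positivity) _)).ne'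
  have hF_nonneg (n : ℕ) (s : ℝ) (hs : s ∈ Ioc 0 t) : 0 ≤ F n s :=
    mul_nonneg (rpow_nonneg (sub_nonneg.2 hs.2) _)
      (mittagLefflerTerm_nonneg hα0.le (by have := hs.1.le; positivity) _)
  have hF_sum : Summable fun n => ∫ s in (0 : ℝ)..t, F n s := by
    simp only [hF]
    exact ((summable_nat_add_iff 1).2 (summable_mittagLefflerTerm hα0 hα1 _)).mul_left _
  calc γ / Gamma α * ∫ s in (0 : ℝ)..t, (t - s) ^ (α - 1) * mittagLeffler α (γ * s ^ α)
      = γ / Gamma α * ∫ s in (0 : ℝ)..t, ∑' n, F n s := by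
        simp only [F, mittagLeffler_eq_tsum, tsum_mul_left]
    _ = ∑' n, mittagLefflerTerm α (n + 1) (γ * t ^ α) := by
        rw [intervalIntegral_tsum_of_nonneg ht.le hF_int hF_nonneg hF_sum, ← tsum_mul_left]
        refine tsum_congr fun n => ?_
        rw [hF n]
        field_simp
    _ = mittagLeffler α (γ * t ^ α) - 1 := by
        rw [mittagLeffler_eq_one_add_tsum hα0 hα1]
        ring
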